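/- arXiv:1808.09213 — 3 statements merged into one kernel-verified Lean document; each statement's English description precedes it below -/
import Mathlib

section
/- Let G and G' be CGS-games on bisimilar concurrent game structures with identical goal sets. A computation κ is sustained by a computation-based Nash equilibrium in G if and only if it is sustained by a computation-based Nash equilibrium in G'; likewise a trace τ is sustained by a computation-based equilibrium in G iff it is sustained by one in G'. -/
namespace CGSGame

abbrev Dir (Ag Ac : Type) := Ag → Ac

structure CGS (Ag AP Ac St : Type) where
  init : St
  feasible : Ag → St → Set Ac
  feasible_nonempty : ∀ i s, (feasible i s).Nonempty
  label : St → Set AP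
  trans : St → Dir Ag Ac → St

variable {Ag AP Ac St St' : Type}

def CGS.legal (M : CGS Ag AP Ac St) (s : St) (d : Dir Ag Ac) : Prop :=
  ∀ i, d i ∈ M.feasible i s

def CGS.step (M : CGS Ag AP Ac St) (s : St) (d : Dir Ag Ac) (s' : St) : Prop :=
  M.legal s d ∧ M.trans s d = s'

structure IsBisim (M : CGS Ag AP Ac St) (M' : CGS Ag AP Ac St') (R : St → St' → Prop) : Prop where
  label_eq : ∀ s t, R s t → M.label s = M'.label t
  forth : ∀ s t s' d, R s t → M.step s d s' → ∃ t', M'.step t d t' ∧ R s' t'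
  back : ∀ s t t' d, R s t → M'.step t d t' → ∃ s', M.step s d s' ∧ R s' t'

def BisimState (M : CGS Ag AP Ac St) (M' : CGS Ag AP Ac St') (s : St) (t : St') : Prop :=
  ∃ R, IsBisim M M' R ∧ R s t

def Bisimilar (M : CGS Ag AP Ac St) (M' : CGS Ag AP Ac St') : Prop :=
  BisimState M M' M.init M'.init

def CGS.statesOf (M : CGS Ag AP Ac St) (k : ℕ → Dir Ag Ac) : ℕ → St
  | 0 => M.init
  | n + 1 => M.trans (M.statesOf k n) (k n)

def CGS.InfComp (M : CGS Ag AP Ac St) (k : ℕ → Dir Ag Ac) : Prop :=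
  ∀ n, M.legal (M.statesOf k n) (k n)

def CGS.runFrom (M : CGS Ag AP Ac St) : St → List (Dir Ag Ac) → List St
  | s, [] => [s]
  | s, d :: l => s :: M.runFrom (M.trans s d) l

def CGS.runOf (M : CGS Ag AP Ac St) (k : List (Dir Ag Ac)) : List St :=
  M.runFrom M.init k

def CGS.endFrom (M : CGS Ag AP Ac St) : St → List (Dir Ag Ac) → St
  | s, [] => s
  | s, d :: l => M.endFrom (M.trans s d) l

def CGS.finalState (M : CGS Ag AP Ac St) (k : List (Dir Ag Ac)) : St :=
  M.endFrom M.init k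

def CGS.legalFrom (M : CGS Ag AP Ac St) : St → List (Dir Ag Ac) → Prop
  | _, [] => True
  | s, d :: l => M.legal s d ∧ M.legalFrom (M.trans s d) l

def CGS.FinComp (M : CGS Ag AP Ac St) (k : List (Dir Ag Ac)) : Prop :=
  M.legalFrom M.init k

def CGS.traceOf (M : CGS Ag AP Ac St) (k : List (Dir Ag Ac)) : List (Set AP) :=
  (M.runOf k).map M.label

def CGS.infTraceOf (M : CGS Ag AP Ac St) (k : ℕ → Dir Ag Ac) : ℕ → Set AP :=
  fun n => M.label (M.statesOf k n)

def CGS.IsHistory (M : CGS Ag AP Ac St) (p : List St) : Prop :=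
  ∃ k, M.FinComp k ∧ p = M.runOf k

def CGS.IsCompStrategy (M : CGS Ag AP Ac St) (i : Ag) (f : List (Dir Ag Ac) → Ac) : Prop :=
  ∀ k, M.FinComp k → f k ∈ M.feasible i (M.finalState k)

def CGS.IsRunStrategy (M : CGS Ag AP Ac St) (i : Ag) (f : List St → Ac) : Prop :=
  ∀ k, M.FinComp k → f (M.runOf k) ∈ M.feasible i (M.finalState k)

def CGS.IsTraceStrategy (M : CGS Ag AP Ac St) (i : Ag) (g : List (Set AP) → Ac) : Prop :=
  ∀ k, M.FinComp k → g (M.traceOf k) ∈ M.feasible i (M.finalState k)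

def CGS.RunInvariant (M : CGS Ag AP Ac St) (f : List (Dir Ag Ac) → Ac) : Prop :=
  ∀ k k', M.FinComp k → M.FinComp k' → M.runOf k = M.runOf k' → f k = f k'

def CGS.TraceInvariant (M : CGS Ag AP Ac St) (f : List (Dir Ag Ac) → Ac) : Prop :=
  ∀ k k', M.FinComp k → M.FinComp k' → M.traceOf k = M.traceOf k' → f k = f k'

def inducedPrefix (f : Ag → List (Dir Ag Ac) → Ac) : ℕ → List (Dir Ag Ac)
  | 0 => []
  | n + 1 => inducedPrefix f n ++ [fun i => f i (inducedPrefix f n)]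

/-- The computation induced by a profile of computation-based strategies. -/
def inducedComp (_M : CGS Ag AP Ac St) (f : Ag → List (Dir Ag Ac) → Ac) : ℕ → Dir Ag Ac :=
  fun n i => f i (inducedPrefix f n)

def inducedPrefixRun (M : CGS Ag AP Ac St) (f : Ag → List St → Ac) : ℕ → List (Dir Ag Ac)
  | 0 => []
  | n + 1 => inducedPrefixRun M f n ++ [fun i => f i (M.runOf (inducedPrefixRun M f n))]

/-- The computation induced by a profile of run-based strategies. -/
def inducedCompRun (M : CGS Ag AP Ac St) (f : Ag → List St → Ac) : ℕ → Dir Ag Ac :=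
  fun n i => f i (M.runOf (inducedPrefixRun M f n))

def inducedPrefixTr (M : CGS Ag AP Ac St) (g : Ag → List (Set AP) → Ac) : ℕ → List (Dir Ag Ac)
  | 0 => []
  | n + 1 => inducedPrefixTr M g n ++ [fun i => g i (M.traceOf (inducedPrefixTr M g n))]

/-- The computation induced by a profile of trace-based strategies. -/
def inducedCompTr (M : CGS Ag AP Ac St) (g : Ag → List (Set AP) → Ac) : ℕ → Dir Ag Ac :=
  fun n i => g i (M.traceOf (inducedPrefixTr M g n))

/-- Statewise bisimilarity of (finite) runs. -/
def SWBisim (M : CGS Ag AP Ac St) (M' : CGS Ag AP Ac St') (p : List St) (p' : List St') : Prop :=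
  List.Forall₂ (BisimState M M') p p'

/-- A run-based strategy is bisimulation-invariant if it chooses the same action at
statewise bisimilar histories. -/
def CGS.BisimInvariant (M : CGS Ag AP Ac St) (f : List St → Ac) : Prop :=
  ∀ p p', M.IsHistory p → M.IsHistory p' → SWBisim M M p p' → f p = f p'

open Classical in
/-- The strategy of a bisimilar structure corresponding to a bisimulation-invariant strategy. -/
noncomputable def tilde [Inhabited Ac] (M : CGS Ag AP Ac St) (M' : CGS Ag AP Ac St')
    (f : List St → Ac) : List St' → Ac :=
  fun p' => if h : ∃ p, M.IsHistory p ∧ SWBisim M M' p p' then f h.choose else default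

section NE
variable [DecidableEq Ag]

def CompNE (M : CGS Ag AP Ac St) (G : Ag → Set (ℕ → Dir Ag Ac))
    (f : Ag → List (Dir Ag Ac) → Ac) : Prop :=
  (∀ i, M.IsCompStrategy i (f i)) ∧
  ∀ i g, M.IsCompStrategy i g →
    inducedComp M (Function.update f i g) ∈ G i → inducedComp M f ∈ G i

def RunNE (M : CGS Ag AP Ac St) (G : Ag → Set (ℕ → Dir Ag Ac))
    (f : Ag → List St → Ac) : Prop :=
  (∀ i, M.IsRunStrategy i (f i)) ∧
  ∀ i g, M.IsRunStrategy i g →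
    inducedCompRun M (Function.update f i g) ∈ G i → inducedCompRun M f ∈ G i

def TraceNE (M : CGS Ag AP Ac St) (G : Ag → Set (ℕ → Dir Ag Ac))
    (g : Ag → List (Set AP) → Ac) : Prop :=
  (∀ i, M.IsTraceStrategy i (g i)) ∧
  ∀ i h, M.IsTraceStrategy i h →
    inducedCompTr M (Function.update g i h) ∈ G i → inducedCompTr M g ∈ G i

def RunInvNE (M : CGS Ag AP Ac St) (G : Ag → Set (ℕ → Dir Ag Ac))
    (f : Ag → List (Dir Ag Ac) → Ac) : Prop :=
  (∀ i, M.IsCompStrategy i (f i) ∧ M.RunInvariant (f i)) ∧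
  ∀ i g, M.IsCompStrategy i g → M.RunInvariant g →
    inducedComp M (Function.update f i g) ∈ G i → inducedComp M f ∈ G i

def TraceInvNE (M : CGS Ag AP Ac St) (G : Ag → Set (ℕ → Dir Ag Ac))
    (f : Ag → List (Dir Ag Ac) → Ac) : Prop :=
  (∀ i, M.IsCompStrategy i (f i) ∧ M.TraceInvariant (f i)) ∧
  ∀ i g, M.IsCompStrategy i g → M.TraceInvariant g →
    inducedComp M (Function.update f i g) ∈ G i → inducedComp M f ∈ G i

def BisimInvNE (M : CGS Ag AP Ac St) (G : Ag → Set (ℕ → Dir Ag Ac))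
    (f : Ag → List St → Ac) : Prop :=
  (∀ i, M.IsRunStrategy i (f i) ∧ M.BisimInvariant (f i)) ∧
  ∀ i g, M.IsRunStrategy i g → M.BisimInvariant g →
    inducedCompRun M (Function.update f i g) ∈ G i → inducedCompRun M f ∈ G i

end NE

section AuxLemmas

lemma CGS.endFrom_append' (M : CGS Ag AP Ac St) (k l : List (Dir Ag Ac)) (s : St) :
    M.endFrom s (k ++ l) = M.endFrom (M.endFrom s k) l := by
  induction k generalizing s with
  | nil => rfl
  | cons d k ih => simpa [CGS.endFrom] using ih (M.trans s d)

lemma CGS.legalFrom_append' (M : CGS Ag AP Ac St) (k l : List (Dir Ag Ac)) (s : St) :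
    M.legalFrom s (k ++ l) ↔ M.legalFrom s k ∧ M.legalFrom (M.endFrom s k) l := by
  induction k generalizing s with
  | nil => simp [CGS.legalFrom, CGS.endFrom]
  | cons d k ih => simp [CGS.legalFrom, CGS.endFrom, ih, and_assoc]

/-- A profile of computation-based strategies induces legal prefixes, and the
induced state sequence matches the final states of the induced prefixes. -/
lemma inducedComp_finComp (M : CGS Ag AP Ac St)
    (f : Ag → List (Dir Ag Ac) → Ac) (hf : ∀ i, M.IsCompStrategy i (f i)) :
    ∀ n, M.FinComp (inducedPrefix f n) ∧
      M.statesOf (inducedComp M f) n = M.finalState (inducedPrefix f n) := by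
  intro n
  induction n with
  | zero => exact ⟨trivial, rfl⟩
  | succ n ih =>
    obtain ⟨h1, h2⟩ := ih
    have hleg : M.legal (M.finalState (inducedPrefix f n))
        (fun i => f i (inducedPrefix f n)) := fun i => hf i _ h1
    constructor
    · show M.legalFrom M.init (inducedPrefix f n ++ [fun i => f i (inducedPrefix f n)])
      rw [CGS.legalFrom_append']
      exact ⟨h1, hleg, trivial⟩
    · show M.trans (M.statesOf (inducedComp M f) n) (inducedComp M f n) = _
      rw [h2]
      show _ = M.endFrom M.init (inducedPrefix f n ++ [fun i => f i (inducedPrefix f n)])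
      rw [CGS.endFrom_append']
      rfl

lemma inducedComp_infComp (M : CGS Ag AP Ac St)
    (f : Ag → List (Dir Ag Ac) → Ac) (hf : ∀ i, M.IsCompStrategy i (f i)) :
    M.InfComp (inducedComp M f) := by
  intro n
  obtain ⟨h1, h2⟩ := inducedComp_finComp M f hf n
  rw [h2]
  exact fun i => hf i _ h1

variable {M : CGS Ag AP Ac St} {M' : CGS Ag AP Ac St'} {R : St → St' → Prop}

lemma IsBisim.feas_eq [DecidableEq Ag] (hR : IsBisim M M' R) {s : St} {t : St'}
    (hst : R s t) (i : Ag) : M.feasible i s = M'.feasible i t := by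
  ext a
  constructor
  · intro ha
    set d : Dir Ag Ac := fun j => if j = i then a else (M.feasible_nonempty j s).choose with hd
    have hleg : M.legal s d := by
      intro j
      by_cases hj : j = i
      · subst hj; simpa [hd] using ha
      · simpa [hd, hj] using (M.feasible_nonempty j s).choose_spec
    obtain ⟨t', ht', _⟩ := hR.forth s t (M.trans s d) d hst ⟨hleg, rfl⟩
    simpa [hd] using ht'.1 i
  · intro ha
    set d : Dir Ag Ac := fun j => if j = i then a else (M'.feasible_nonempty j t).choose with hd
    have hleg : M'.legal t d := by
      intro j
      by_cases hj : j = i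
      · subst hj; simpa [hd] using ha
      · simpa [hd, hj] using (M'.feasible_nonempty j t).choose_spec
    obtain ⟨s', hs', _⟩ := hR.back s t (M'.trans t d) d hst ⟨hleg, rfl⟩
    simpa [hd] using hs'.1 i

lemma IsBisim.legal_iff [DecidableEq Ag] (hR : IsBisim M M' R) {s : St} {t : St'}
    (hst : R s t) (d : Dir Ag Ac) : M.legal s d ↔ M'.legal t d := by
  constructor <;> intro h i
  · rw [← hR.feas_eq hst i]; exact h i
  · rw [hR.feas_eq hst i]; exact h i

lemma IsBisim.trans_rel (hR : IsBisim M M' R) {s : St} {t : St'}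
    (hst : R s t) {d : Dir Ag Ac} (hleg : M.legal s d) :
    R (M.trans s d) (M'.trans t d) := by
  obtain ⟨t', ⟨_, he⟩, hr⟩ := hR.forth s t (M.trans s d) d hst ⟨hleg, rfl⟩
  rwa [he]

lemma IsBisim.legalFrom_iff [DecidableEq Ag] (hR : IsBisim M M' R) :
    ∀ (k : List (Dir Ag Ac)) {s : St} {t : St'}, R s t →
      ((M.legalFrom s k ↔ M'.legalFrom t k) ∧
       (M.legalFrom s k → R (M.endFrom s k) (M'.endFrom t k))) := by
  intro k
  induction k with
  | nil => exact fun hst => ⟨Iff.rfl, fun _ => hst⟩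
  | cons d k ih =>
    intro s t hst
    constructor
    · show M.legal s d ∧ _ ↔ M'.legal t d ∧ _
      constructor
      · rintro ⟨h1, h2⟩
        exact ⟨(hR.legal_iff hst d).mp h1, ((ih (hR.trans_rel hst h1)).1).mp h2⟩
      · rintro ⟨h1, h2⟩
        have h1' := (hR.legal_iff hst d).mpr h1
        exact ⟨h1', ((ih (hR.trans_rel hst h1')).1).mpr h2⟩
    · rintro ⟨h1, h2⟩
      exact (ih (hR.trans_rel hst h1)).2 h2

lemma IsBisim.infComp_rel (hR : IsBisim M M' R) [DecidableEq Ag]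
    (hRinit : R M.init M'.init) {k : ℕ → Dir Ag Ac} (hk : M.InfComp k) :
    ∀ n, R (M.statesOf k n) (M'.statesOf k n) := by
  intro n
  induction n with
  | zero => exact hRinit
  | succ n ih => exact hR.trans_rel ih (hk n)

lemma IsBisim.infComp_rel' (hR : IsBisim M M' R) [DecidableEq Ag]
    (hRinit : R M.init M'.init) {k : ℕ → Dir Ag Ac} (hk : M'.InfComp k) :
    ∀ n, R (M.statesOf k n) (M'.statesOf k n) := by
  intro n
  induction n with
  | zero => exact hRinit
  | succ n ih => exact hR.trans_rel ih ((hR.legal_iff ih (k n)).mpr (hk n))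

end AuxLemmas

theorem sustained_invariance_under_bisimulation [DecidableEq Ag]
    (M : CGS Ag AP Ac St) (M' : CGS Ag AP Ac St') (h : Bisimilar M M')
    (G : Ag → Set (ℕ → Dir Ag Ac)) :
    (∀ k : ℕ → Dir Ag Ac, M.InfComp k →
       ((∃ f, CompNE M G f ∧ inducedComp M f = k) ↔
        (∃ f, CompNE M' G f ∧ inducedComp M' f = k))) ∧
    (∀ t : ℕ → Set AP, (∃ k, M.InfComp k ∧ t = M.infTraceOf k) →
       ((∃ f, CompNE M G f ∧ M.infTraceOf (inducedComp M f) = t) ↔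
        (∃ f, CompNE M' G f ∧ M'.infTraceOf (inducedComp M' f) = t))) := by
  obtain ⟨R, hR, hRinit⟩ := h
  have hFin : ∀ k, M.FinComp k ↔ M'.FinComp k :=
    fun k => (hR.legalFrom_iff k hRinit).1
  have hFinal : ∀ k, M.FinComp k → R (M.finalState k) (M'.finalState k) :=
    fun k => (hR.legalFrom_iff k hRinit).2
  have hStrat : ∀ (i : Ag) (f : List (Dir Ag Ac) → Ac),
      M.IsCompStrategy i f ↔ M'.IsCompStrategy i f := by
    intro i f
    constructor <;> intro hf k hk
    · rw [← hR.feas_eq (hFinal k ((hFin k).mpr hk)) i]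
      exact hf k ((hFin k).mpr hk)
    · rw [hR.feas_eq (hFinal k hk) i]
      exact hf k ((hFin k).mp hk)
  have hNE : ∀ f, CompNE M G f ↔ CompNE M' G f := by
    intro f
    constructor <;> rintro ⟨h1, h2⟩
    · exact ⟨fun i => (hStrat i (f i)).mp (h1 i),
        fun i g hg hmem => h2 i g ((hStrat i g).mpr hg) hmem⟩
    · exact ⟨fun i => (hStrat i (f i)).mpr (h1 i),
        fun i g hg hmem => h2 i g ((hStrat i g).mp hg) hmem⟩
  have hTr : ∀ k : ℕ → Dir Ag Ac, M.InfComp k → M.infTraceOf k = M'.infTraceOf k := by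
    intro k hk
    funext n
    exact hR.label_eq _ _ (hR.infComp_rel hRinit hk n)
  have hTr' : ∀ k : ℕ → Dir Ag Ac, M'.InfComp k → M.infTraceOf k = M'.infTraceOf k := by
    intro k hk
    funext n
    exact hR.label_eq _ _ (hR.infComp_rel' hRinit hk n)
  constructor
  · intro k _
    constructor <;> rintro ⟨f, hf, hk⟩
    · exact ⟨f, (hNE f).mp hf, hk⟩
    · exact ⟨f, (hNE f).mpr hf, hk⟩
  · intro t _
    constructor <;> rintro ⟨f, hf, ht⟩
    · refine ⟨f, (hNE f).mp hf, ?_⟩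
      have hinf : M.InfComp (inducedComp M f) := inducedComp_infComp M f hf.1
      calc M'.infTraceOf (inducedComp M' f)
          = M'.infTraceOf (inducedComp M f) := rfl
        _ = M.infTraceOf (inducedComp M f) := (hTr _ hinf).symm
        _ = t := ht
    · refine ⟨f, (hNE f).mpr hf, ?_⟩
      have hinf : M'.InfComp (inducedComp M' f) := inducedComp_infComp M' f hf.1
      calc M.infTraceOf (inducedComp M f)
          = M'.infTraceOf (inducedComp M f) := hTr' _ hinf
        _ = M'.infTraceOf (inducedComp M' f) := rfl
        _ = t := ht
end CGSGame
end

section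
/- Let M and M' be bisimilar concurrent game structures, and let f_i be a bisimulation-invariant run-based strategy for player i in M. Define f̃_i on histories of M' by f̃_i(π) = f_i(π') for any history π' of M statewise bisimilar to π. Then f̃_i is a well-defined bisimulation-invariant run-based strategy in M', and the mapping f_i ↦ f̃_i is injective. -/
namespace CGSGame

variable {Ag AP Ac St St' : Type}

section Aux

variable {St'' : Type} {M : CGS Ag AP Ac St} {M' : CGS Ag AP Ac St'} {M'' : CGS Ag AP Ac St''}

lemma isBisim_flip {R : St → St' → Prop} (h : IsBisim M M' R) :
    IsBisim M' M (fun t s => R s t) where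
  label_eq t s hr := (h.label_eq s t hr).symm
  forth t s t' d hr hstep := by
    obtain ⟨s', hs, hr'⟩ := h.back s t t' d hr hstep
    exact ⟨s', hs, hr'⟩
  back t s s' d hr hstep := by
    obtain ⟨t', ht, hr'⟩ := h.forth s t s' d hr hstep
    exact ⟨t', ht, hr'⟩

lemma bisimState_symm {s : St} {t : St'} (h : BisimState M M' s t) :
    BisimState M' M t s := by
  obtain ⟨R, hR, hst⟩ := h
  exact ⟨fun t s => R s t, isBisim_flip hR, hst⟩

lemma isBisim_comp {R : St → St' → Prop} {S : St' → St'' → Prop}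
    (h1 : IsBisim M M' R) (h2 : IsBisim M' M'' S) :
    IsBisim M M'' (fun s u => ∃ t, R s t ∧ S t u) where
  label_eq s u := by
    rintro ⟨t, hr, hs⟩
    rw [h1.label_eq s t hr, h2.label_eq t u hs]
  forth s u s' d := by
    rintro ⟨t, hr, hs⟩ hstep
    obtain ⟨t', ht, hr'⟩ := h1.forth s t s' d hr hstep
    obtain ⟨u', hu, hs'⟩ := h2.forth t u t' d hs ht
    exact ⟨u', hu, t', hr', hs'⟩
  back s u u' d := by
    rintro ⟨t, hr, hs⟩ hstep
    obtain ⟨t', ht, hs'⟩ := h2.back t u u' d hs hstep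
    obtain ⟨s', hsstep, hr'⟩ := h1.back s t t' d hr ht
    exact ⟨s', hsstep, t', hr', hs'⟩

lemma bisimState_trans {s : St} {t : St'} {u : St''}
    (h1 : BisimState M M' s t) (h2 : BisimState M' M'' t u) :
    BisimState M M'' s u := by
  obtain ⟨R, hR, hst⟩ := h1
  obtain ⟨S, hS, htu⟩ := h2
  exact ⟨fun s u => ∃ t, R s t ∧ S t u, isBisim_comp hR hS, t, hst, htu⟩

lemma forall2_trans {α β γ : Type*} {R : α → β → Prop} {S : β → γ → Prop} {T : α → γ → Prop}
    (hcomp : ∀ a b c, R a b → S b c → T a c) :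
    ∀ {l : List α} {m : List β} {n : List γ},
      List.Forall₂ R l m → List.Forall₂ S m n → List.Forall₂ T l n := by
  intro l m n h1
  induction h1 generalizing n with
  | nil => intro h2; cases h2; exact .nil
  | cons hab h ih =>
    intro h2
    cases h2 with
    | cons hbc h2' => exact .cons (hcomp _ _ _ hab hbc) (ih h2')

lemma swbisim_symm {p : List St} {p' : List St'} (h : SWBisim M M' p p') :
    SWBisim M' M p' p := by
  induction h with
  | nil => exact .nil
  | cons hab _ ih => exact .cons (bisimState_symm hab) ih

lemma swbisim_trans {p : List St} {p' : List St'} {p'' : List St''}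
    (h1 : SWBisim M M' p p') (h2 : SWBisim M' M'' p' p'') : SWBisim M M'' p p'' :=
  forall2_trans (R := BisimState M M') (S := BisimState M' M'') (T := BisimState M M'')
    (fun _ _ _ ha hb => bisimState_trans ha hb) h1 h2

lemma forall2_getLast {α β : Type*} {R : α → β → Prop} :
    ∀ {l : List α} {m : List β}, List.Forall₂ R l m → ∀ (h : l ≠ []) (h' : m ≠ []),
      R (l.getLast h) (m.getLast h') := by
  intro l m hf
  induction hf with
  | nil => intro h _; exact absurd rfl h
  | @cons a b l m hab htail ih =>
    intro h h'
    cases htail with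
    | nil => simpa using hab
    | @cons a' b' l' m' hab' htail' =>
      rw [List.getLast_cons (l := a' :: l') (by simp),
        List.getLast_cons (l := b' :: m') (by simp)]
      exact ih (by simp) (by simp)

lemma back_run {R : St → St' → Prop} (hR : IsBisim M M' R) :
    ∀ (k : List (Dir Ag Ac)) (s : St) (t : St'), R s t → M'.legalFrom t k →
      M.legalFrom s k ∧ List.Forall₂ R (M.runFrom s k) (M'.runFrom t k) := by
  intro k
  induction k with
  | nil => intro s t h _; exact ⟨trivial, .cons h .nil⟩
  | cons d l ih =>
    intro s t h hl
    obtain ⟨hld, hll⟩ := hl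
    obtain ⟨s', ⟨hleg, htr⟩, hR'⟩ := hR.back s t (M'.trans t d) d h ⟨hld, rfl⟩
    obtain ⟨h1, h2⟩ := ih (M.trans s d) (M'.trans t d) (by rw [htr]; exact hR') hll
    exact ⟨⟨hleg, h1⟩, .cons h h2⟩

lemma bisimilar_symm (hb : Bisimilar M M') : Bisimilar M' M := by
  obtain ⟨R, hR, hinit⟩ := hb
  exact ⟨fun t s => R s t, isBisim_flip hR, hinit⟩

lemma exists_history (hb : Bisimilar M M') {p' : List St'} (hp' : M'.IsHistory p') :
    ∃ p, M.IsHistory p ∧ SWBisim M M' p p' := by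
  obtain ⟨R, hR, hinit⟩ := hb
  obtain ⟨k, hk, rfl⟩ := hp'
  obtain ⟨h1, h2⟩ := back_run hR k M.init M'.init hinit hk
  exact ⟨M.runOf k, ⟨k, h1, rfl⟩, h2.imp fun _ _ h => ⟨R, hR, h⟩⟩

lemma runFrom_ne_nil (k : List (Dir Ag Ac)) (s : St) : M.runFrom s k ≠ [] := by
  cases k <;> simp [CGS.runFrom]

lemma endFrom_eq_getLast :
    ∀ (k : List (Dir Ag Ac)) (s : St) (h : M.runFrom s k ≠ []),
      M.endFrom s k = (M.runFrom s k).getLast h := by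
  intro k
  induction k with
  | nil => intro s h; simp [CGS.endFrom, CGS.runFrom]
  | cons d l ih =>
    intro s h
    have h' : M.runFrom (M.trans s d) l ≠ [] := runFrom_ne_nil l _
    simp only [CGS.endFrom, CGS.runFrom]
    rw [List.getLast_cons h']
    exact ih _ h'

lemma feasible_transfer {s : St} {t : St'} (h : BisimState M M' s t) (i : Ag) {a : Ac}
    (ha : a ∈ M.feasible i s) : a ∈ M'.feasible i t := by
  classical
  obtain ⟨R, hR, hst⟩ := h
  set d : Dir Ag Ac := fun j => if j = i then a else (M.feasible_nonempty j s).choose with hd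
  have hleg : M.legal s d := by
    intro j
    by_cases hj : j = i
    · subst hj; simpa [hd] using ha
    · simpa [hd, hj] using (M.feasible_nonempty j s).choose_spec
  obtain ⟨t', ⟨hleg', _⟩, _⟩ := hR.forth s t (M.trans s d) d hst ⟨hleg, rfl⟩
  have := hleg' i
  simpa [hd] using this

lemma tilde_eq [Inhabited Ac] (f : List St → Ac) (hinv : M.BisimInvariant f)
    {p : List St} {p' : List St'} (hp : M.IsHistory p) (hsw : SWBisim M M' p p') :
    tilde M M' f p' = f p := by
  have h : ∃ q, M.IsHistory q ∧ SWBisim M M' q p' := ⟨p, hp, hsw⟩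
  rw [tilde, dif_pos h]
  exact hinv _ _ h.choose_spec.1 hp (swbisim_trans h.choose_spec.2 (swbisim_symm hsw))

lemma final_bisim {k : List (Dir Ag Ac)} {k' : List (Dir Ag Ac)}
    (hsw : SWBisim M M' (M.runOf k) (M'.runOf k')) :
    BisimState M M' (M.finalState k) (M'.finalState k') := by
  have hne : M.runOf k ≠ [] := runFrom_ne_nil k _
  have hne' : M'.runOf k' ≠ [] := runFrom_ne_nil k' _
  have := forall2_getLast hsw hne hne'
  rwa [CGS.finalState, CGS.finalState, endFrom_eq_getLast k _ hne,
    endFrom_eq_getLast k' _ hne']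

end Aux

theorem tilde_properties [Inhabited Ac]
    (M : CGS Ag AP Ac St) (M' : CGS Ag AP Ac St') (hb : Bisimilar M M') (i : Ag) :
    (∀ f : List St → Ac, M.IsRunStrategy i f → M.BisimInvariant f →
       (M'.IsRunStrategy i (tilde M M' f) ∧ M'.BisimInvariant (tilde M M' f) ∧
        ∀ p p', M.IsHistory p → M'.IsHistory p' → SWBisim M M' p p' →
          tilde M M' f p' = f p)) ∧
    (∀ f g : List St → Ac,
       M.IsRunStrategy i f → M.BisimInvariant f →
       M.IsRunStrategy i g → M.BisimInvariant g →
       tilde M M' f = tilde M M' g → ∀ p, M.IsHistory p → f p = g p) := by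
  constructor
  · intro f hf hinv
    refine ⟨?_, ?_, fun p p' hp _ hsw => tilde_eq f hinv hp hsw⟩
    · intro k' hk'
      have hhist : M'.IsHistory (M'.runOf k') := ⟨k', hk', rfl⟩
      obtain ⟨p, hp, hsw⟩ := exists_history hb hhist
      rw [tilde_eq f hinv hp hsw]
      obtain ⟨k, hk, rfl⟩ := hp
      exact feasible_transfer (final_bisim hsw) i (hf k hk)
    · intro p'1 p'2 h1 h2 hsw'
      obtain ⟨p, hp, hsw1⟩ := exists_history hb h1
      have hsw2 : SWBisim M M' p p'2 := swbisim_trans hsw1 hsw'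
      rw [tilde_eq f hinv hp hsw1, tilde_eq f hinv hp hsw2]
  · intro f g hf hfinv hg hginv heq p hp
    obtain ⟨p', hp', hsw'⟩ := exists_history (bisimilar_symm hb) hp
    have hsw : SWBisim M M' p p' := swbisim_symm hsw'
    calc f p = tilde M M' f p' := (tilde_eq f hfinv hp hsw).symm
      _ = tilde M M' g p' := by rw [heq]
      _ = g p := tilde_eq g hginv hp hsw
end CGSGame
end

section
/- Let M and M' be bisimilar nondeterministic concurrent game structures with identical goal sets of sets of computations Γ_i ⊆ 2^{comps^ω}. A computation-based (respectively trace-based) strategy profile f is a Nash equilibrium in G = (M, Γ_1,...,Γ_n) if and only if f is a Nash equilibrium in G' = (M', Γ_1,...,Γ_n). -/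
namespace CGSGame

variable {Ag AP Ac St St' : Type}

structure NCGS (Ag AP Ac St : Type) where
  init : St
  feasible : Ag → St → Set Ac
  feasible_nonempty : ∀ i s, (feasible i s).Nonempty
  label : St → Set AP
  trans : St → Dir Ag Ac → Set St
  trans_nonempty : ∀ s d, (trans s d).Nonempty

def NCGS.legal (M : NCGS Ag AP Ac St) (s : St) (d : Dir Ag Ac) : Prop :=
  ∀ i, d i ∈ M.feasible i s

def NCGS.step (M : NCGS Ag AP Ac St) (s : St) (d : Dir Ag Ac) (s' : St) : Prop :=
  M.legal s d ∧ s' ∈ M.trans s d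

structure IsBisimN (M : NCGS Ag AP Ac St) (M' : NCGS Ag AP Ac St')
    (R : St → St' → Prop) : Prop where
  label_eq : ∀ s t, R s t → M.label s = M'.label t
  forth : ∀ s t s' d, R s t → M.step s d s' → ∃ t', M'.step t d t' ∧ R s' t'
  back : ∀ s t t' d, R s t → M'.step t d t' → ∃ s', M.step s d s' ∧ R s' t'

def BisimilarN (M : NCGS Ag AP Ac St) (M' : NCGS Ag AP Ac St') : Prop :=
  ∃ R, IsBisimN M M' R ∧ R M.init M'.init

/-- `M.IsRunList s k p` holds if `p` is a legal finite run from `s` following the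
finite computation `k`. -/
def NCGS.IsRunList (M : NCGS Ag AP Ac St) : St → List (Dir Ag Ac) → List St → Prop
  | s, [], p => p = [s]
  | s, d :: l, p => M.legal s d ∧ ∃ s' ∈ M.trans s d, ∃ p', M.IsRunList s' l p' ∧ p = s :: p'

def NCGS.IsCompStrategy (M : NCGS Ag AP Ac St) (i : Ag) (f : List (Dir Ag Ac) → Ac) : Prop :=
  ∀ k p t, M.IsRunList M.init k p → p.getLast? = some t → f k ∈ M.feasible i t

def NCGS.IsTraceStrategy (M : NCGS Ag AP Ac St) (i : Ag) (g : List (Set AP) → Ac) : Prop :=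
  ∀ k p t, M.IsRunList M.init k p → p.getLast? = some t →
    g (p.map M.label) ∈ M.feasible i t

def NCGS.IsPath (M : NCGS Ag AP Ac St) (k : ℕ → Dir Ag Ac) (r : ℕ → St) : Prop :=
  r 0 = M.init ∧ ∀ n, M.step (r n) (k n) (r (n + 1))

/-- The set of computations complying with a profile of computation-based strategies. -/
def outcomesCompN (M : NCGS Ag AP Ac St) (f : Ag → List (Dir Ag Ac) → Ac) :
    Set (ℕ → Dir Ag Ac) :=
  {k | (∃ r, M.IsPath k r) ∧ ∀ n, k n = fun i => f i (List.ofFn fun j : Fin n => k j.1)}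

/-- The set of computations complying with a profile of trace-based strategies. -/
def outcomesTrN (M : NCGS Ag AP Ac St) (g : Ag → List (Set AP) → Ac) :
    Set (ℕ → Dir Ag Ac) :=
  {k | ∃ r, M.IsPath k r ∧
    ∀ n, k n = fun i => g i (List.ofFn fun j : Fin (n + 1) => M.label (r j.1))}

def CompNEN [DecidableEq Ag] (M : NCGS Ag AP Ac St)
    (G : Ag → Set (Set (ℕ → Dir Ag Ac))) (f : Ag → List (Dir Ag Ac) → Ac) : Prop :=
  (∀ i, M.IsCompStrategy i (f i)) ∧
  ∀ i g, M.IsCompStrategy i g →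
    outcomesCompN M (Function.update f i g) ∈ G i → outcomesCompN M f ∈ G i

def TraceNEN [DecidableEq Ag] (M : NCGS Ag AP Ac St)
    (G : Ag → Set (Set (ℕ → Dir Ag Ac))) (g : Ag → List (Set AP) → Ac) : Prop :=
  (∀ i, M.IsTraceStrategy i (g i)) ∧
  ∀ i h, M.IsTraceStrategy i h →
    outcomesTrN M (Function.update g i h) ∈ G i → outcomesTrN M g ∈ G i

section Aux

variable {M : NCGS Ag AP Ac St} {M' : NCGS Ag AP Ac St'} {R : St → St' → Prop}

lemma IsBisimN.symm (h : IsBisimN M M' R) : IsBisimN M' M (fun t s => R s t) where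
  label_eq := fun t s hR => (h.label_eq s t hR).symm
  forth := fun t s t' d hR hstep => h.back s t t' d hR hstep
  back := fun t s s' d hR hstep => h.forth s t s' d hR hstep

lemma IsBisimN.feasible_subset (h : IsBisimN M M' R) {s t} (hR : R s t) (i : Ag) :
    M.feasible i s ⊆ M'.feasible i t := by
  classical
  intro a ha
  set d : Dir Ag Ac := Function.update (fun j => (M.feasible_nonempty j s).choose) i a with hd
  have hleg : M.legal s d := by
    intro j
    by_cases hji : j = i
    · subst hji; simpa [hd] using ha
    · simpa [hd, Function.update_of_ne hji] using (M.feasible_nonempty j s).choose_spec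
  obtain ⟨s', hs'⟩ := M.trans_nonempty s d
  obtain ⟨t', hstep', _⟩ := h.forth s t s' d hR ⟨hleg, hs'⟩
  have := hstep'.1 i
  simpa [hd] using this

lemma IsBisimN.feasible_eq (h : IsBisimN M M' R) {s t} (hR : R s t) (i : Ag) :
    M.feasible i s = M'.feasible i t :=
  Set.Subset.antisymm (h.feasible_subset hR i) (h.symm.feasible_subset hR i)

lemma IsBisimN.runList (h : IsBisimN M M' R) :
    ∀ (k : List (Dir Ag Ac)) {s t p}, R s t → M.IsRunList s k p →
      ∃ q, M'.IsRunList t k q ∧ List.Forall₂ R p q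
  | [], s, t, p, hR, hp => ⟨[t], rfl, by
      subst hp; exact List.Forall₂.cons hR List.Forall₂.nil⟩
  | d :: l, s, t, p, hR, hp => by
    obtain ⟨hleg, s', hs', p', hp', rfl⟩ := hp
    obtain ⟨t', hstep', hR'⟩ := h.forth s t s' d hR ⟨hleg, hs'⟩
    obtain ⟨q', hq', hf⟩ := h.runList l hR' hp'
    exact ⟨t :: q', ⟨hstep'.1, t', hstep'.2, q', hq', rfl⟩, List.Forall₂.cons hR hf⟩

lemma forall₂_getLast? {R : St → St' → Prop} :
    ∀ {p : List St} {q : List St'}, List.Forall₂ R p q →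
      ∀ {u}, p.getLast? = some u → ∃ v, q.getLast? = some v ∧ R u v := by
  intro p q hpq
  induction hpq with
  | nil => intro u hu; simp at hu
  | @cons a b l₁ l₂ hab htail ih =>
    intro u hu
    cases htail with
    | nil =>
      simp only [List.getLast?_singleton, Option.some.injEq] at hu
      exact ⟨b, by simp, hu ▸ hab⟩
    | @cons a' b' l₁' l₂' h2 h3 =>
      rw [List.getLast?_cons_cons] at hu
      obtain ⟨v, hv, hRv⟩ := ih hu
      exact ⟨v, by rwa [List.getLast?_cons_cons], hRv⟩

lemma IsBisimN.forall₂_label (h : IsBisimN M M' R) :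
    ∀ {p q}, List.Forall₂ R p q → p.map M.label = q.map M'.label := by
  intro p q hpq
  induction hpq with
  | nil => rfl
  | cons hab _ ih => simp [h.label_eq _ _ hab, ih]

lemma IsBisimN.path (h : IsBisimN M M' R) (hinit : R M.init M'.init)
    {k : ℕ → Dir Ag Ac} {r : ℕ → St} (hr : M.IsPath k r) :
    ∃ r', M'.IsPath k r' ∧ ∀ n, R (r n) (r' n) := by
  let g : ∀ n, {t : St' // R (r n) t} := fun n => Nat.rec
    ⟨M'.init, by rw [hr.1]; exact hinit⟩
    (fun n p => ⟨Classical.choose (h.forth (r n) p.1 (r (n+1)) (k n) p.2 (hr.2 n)),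
      (Classical.choose_spec (h.forth (r n) p.1 (r (n+1)) (k n) p.2 (hr.2 n))).2⟩) n
  refine ⟨fun n => (g n).1, ⟨rfl, fun n => ?_⟩, fun n => (g n).2⟩
  exact (Classical.choose_spec (h.forth (r n) (g n).1 (r (n+1)) (k n) (g n).2 (hr.2 n))).1

lemma IsBisimN.outcomesComp_subset (h : IsBisimN M M' R) (hinit : R M.init M'.init)
    (f : Ag → List (Dir Ag Ac) → Ac) :
    outcomesCompN M f ⊆ outcomesCompN M' f := by
  rintro k ⟨⟨r, hr⟩, hk⟩
  obtain ⟨r', hr', -⟩ := h.path hinit hr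
  exact ⟨⟨r', hr'⟩, hk⟩

lemma IsBisimN.outcomesComp_eq (h : IsBisimN M M' R) (hinit : R M.init M'.init)
    (f : Ag → List (Dir Ag Ac) → Ac) :
    outcomesCompN M f = outcomesCompN M' f :=
  Set.Subset.antisymm (h.outcomesComp_subset hinit f) (h.symm.outcomesComp_subset hinit f)

lemma IsBisimN.outcomesTr_subset (h : IsBisimN M M' R) (hinit : R M.init M'.init)
    (g : Ag → List (Set AP) → Ac) :
    outcomesTrN M g ⊆ outcomesTrN M' g := by
  rintro k ⟨r, hr, hk⟩
  obtain ⟨r', hr', hRr⟩ := h.path hinit hr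
  refine ⟨r', hr', fun n => ?_⟩
  have : (List.ofFn fun j : Fin (n + 1) => M.label (r j.1)) =
      (List.ofFn fun j : Fin (n + 1) => M'.label (r' j.1)) := by
    congr 1
    funext j
    exact h.label_eq _ _ (hRr j.1)
  rw [hk n, this]

lemma IsBisimN.outcomesTr_eq (h : IsBisimN M M' R) (hinit : R M.init M'.init)
    (g : Ag → List (Set AP) → Ac) :
    outcomesTrN M g = outcomesTrN M' g :=
  Set.Subset.antisymm (h.outcomesTr_subset hinit g) (h.symm.outcomesTr_subset hinit g)

lemma IsBisimN.compStrategy (h : IsBisimN M M' R) (hinit : R M.init M'.init)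
    {i : Ag} {f : List (Dir Ag Ac) → Ac} (hf : M.IsCompStrategy i f) :
    M'.IsCompStrategy i f := by
  intro k p t hp hlast
  obtain ⟨q, hq, hfa⟩ := h.symm.runList k hinit hp
  obtain ⟨v, hv, hRv⟩ := forall₂_getLast? hfa hlast
  have := hf k q v hq hv
  rwa [h.feasible_eq hRv i] at this

lemma IsBisimN.traceStrategy (h : IsBisimN M M' R) (hinit : R M.init M'.init)
    {i : Ag} {g : List (Set AP) → Ac} (hg : M.IsTraceStrategy i g) :
    M'.IsTraceStrategy i g := by
  intro k p t hp hlast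
  obtain ⟨q, hq, hfa⟩ := h.symm.runList k hinit hp
  obtain ⟨v, hv, hRv⟩ := forall₂_getLast? hfa hlast
  have hlab : p.map M'.label = q.map M.label := h.symm.forall₂_label hfa
  have := hg k q v hq hv
  rw [hlab]
  rwa [h.feasible_eq hRv i] at this

lemma IsBisimN.compNE [DecidableEq Ag] (h : IsBisimN M M' R) (hinit : R M.init M'.init)
    (G : Ag → Set (Set (ℕ → Dir Ag Ac))) (f : Ag → List (Dir Ag Ac) → Ac)
    (hf : CompNEN M G f) : CompNEN M' G f := by
  refine ⟨fun i => h.compStrategy hinit (hf.1 i), fun i g hg hmem => ?_⟩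
  rw [← h.outcomesComp_eq hinit]
  refine hf.2 i g (h.symm.compStrategy hinit hg) ?_
  rwa [h.outcomesComp_eq hinit]

lemma IsBisimN.traceNE [DecidableEq Ag] (h : IsBisimN M M' R) (hinit : R M.init M'.init)
    (G : Ag → Set (Set (ℕ → Dir Ag Ac))) (g : Ag → List (Set AP) → Ac)
    (hg : TraceNEN M G g) : TraceNEN M' G g := by
  refine ⟨fun i => h.traceStrategy hinit (hg.1 i), fun i k hk hmem => ?_⟩
  rw [← h.outcomesTr_eq hinit]
  refine hg.2 i k (h.symm.traceStrategy hinit hk) ?_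
  rwa [h.outcomesTr_eq hinit]

end Aux

theorem nondeterministic_NE_invariance [DecidableEq Ag]
    (M : NCGS Ag AP Ac St) (M' : NCGS Ag AP Ac St') (h : BisimilarN M M')
    (G : Ag → Set (Set (ℕ → Dir Ag Ac))) :
    (∀ f : Ag → List (Dir Ag Ac) → Ac, CompNEN M G f ↔ CompNEN M' G f) ∧
    (∀ g : Ag → List (Set AP) → Ac, TraceNEN M G g ↔ TraceNEN M' G g) := by
  obtain ⟨R, hB, hI⟩ := h
  exact ⟨fun f => ⟨hB.compNE hI G f, hB.symm.compNE hI G f⟩,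
    fun g => ⟨hB.traceNE hI G g, hB.symm.traceNE hI G g⟩⟩
end CGSGame
end
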